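/- The function f_C : SO(n) → ℝ, f_C(A) = Σᵢ cᵢ·Aᵢᵢ with 0 ≤ c₁ < c₂ < ... < cₙ, is a Morse function: every critical point of f_C is non-degenerate. -/

import Mathlib

attribute [local instance] Matrix.normedAddCommGroup Matrix.normedSpace

/-- The index set of pairs `i < j` in `Fin n`. -/
def Pairs (n : ℕ) := {p : Fin n × Fin n // p.1 < p.2}

instance (n : ℕ) : Fintype (Pairs n) := Subtype.fintype _
instance (n : ℕ) : DecidableEq (Pairs n) := Subtype.instDecidableEq

/-- The rotation matrix `B i j θ`. -/
noncomputable def rotB (n : ℕ) (i j : Fin n) (θ : ℝ) : Matrix (Fin n) (Fin n) ℝ :=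
  Matrix.of fun k l =>
    if k = i ∧ l = i then Real.cos θ
    else if k = j ∧ l = j then Real.cos θ
    else if k = i ∧ l = j then -Real.sin θ
    else if k = j ∧ l = i then Real.sin θ
    else if k = l then 1 else 0

/-- `A ∈ SO(n)` is a critical point of `f_C` if the derivative of `f_C` along every
differentiable curve in `SO(n)` through `A` vanishes at `A`. -/
def IsCritPt (n : ℕ) (c : Fin n → ℝ) (A : Matrix (Fin n) (Fin n) ℝ) : Prop :=
  ∀ γ : ℝ → Matrix (Fin n) (Fin n) ℝ,
    (∀ t, γ t ∈ Matrix.specialOrthogonalGroup (Fin n) ℝ) → γ 0 = A →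
    DifferentiableAt ℝ γ 0 → deriv (fun t => ∑ i, c i * γ t i i) 0 = 0

/-- The Hessian of `f_C` at `A` in the local coordinates given by the rotations `B_{ij}`. -/
noncomputable def hessB (n : ℕ) (c : Fin n → ℝ) (A : Matrix (Fin n) (Fin n) ℝ) :
    Matrix (Pairs n) (Pairs n) ℝ :=
  Matrix.of fun p q =>
    deriv (fun φ => deriv
      (fun θ => ∑ k, c k * (A * rotB n p.1.1 p.1.2 θ * rotB n q.1.1 q.1.2 φ) k k) 0) 0

/-!
At a critical point `A`, differentiating `f_C` along the curves `t ↦ A * B_{ij}(t)` gives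
`c_i A_ij = c_j A_ji`, i.e. `diag(c) * A` is symmetric. For orthogonal `A` this forces `A` to commute
with `diag(c)²`, whose entries are distinct because `0 ≤ c_1 < ⋯ < c_n`; hence `A` is diagonal with
entries `±1`. At such `A` the Hessian in the coordinates `B_{ij}` is diagonal with entries
`-(c_i A_ii + c_j A_jj)`, which cannot vanish since `c_j > c_i ≥ 0`.
-/

open Matrix

namespace Matrix

variable {m : Type*} [Fintype m]

/-- With `w = c`, this is `f_C` extended linearly to all matrices. -/
def weightedDiag (w : m → ℝ) : Matrix m m ℝ →ₗ[ℝ] ℝ where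
  toFun X := ∑ k, w k * X k k
  map_add' X Y := by simp only [add_apply, mul_add, Finset.sum_add_distrib]
  map_smul' a X := by
    simp only [smul_apply, smul_eq_mul, Finset.mul_sum, RingHom.id_apply]
    exact Finset.sum_congr rfl fun _ _ => by ring

lemma weightedDiag_apply (w : m → ℝ) (X : Matrix m m ℝ) :
    weightedDiag w X = ∑ k, w k * X k k := rfl

lemma _root_.HasDerivAt.weightedDiag {γ : ℝ → Matrix m m ℝ}
    {γ' : Matrix m m ℝ} {t : ℝ} (hγ : HasDerivAt γ γ' t) (w : m → ℝ) :
    HasDerivAt (fun s => Matrix.weightedDiag w (γ s)) (Matrix.weightedDiag w γ') t :=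
  (Matrix.weightedDiag w).toContinuousLinearMap.hasFDerivAt.comp_hasDerivAt t hγ

variable [DecidableEq m]

lemma weightedDiag_single (w : m → ℝ) (a b : m) :
    weightedDiag w (single a b 1) = if a = b then w a else 0 := by
  split_ifs with h
  · subst h; simp [weightedDiag_apply, single_apply]
  · exact Finset.sum_eq_zero fun k _ => by
      rw [single_apply, if_neg (by rintro ⟨rfl, rfl⟩; exact h rfl), mul_zero]

lemma weightedDiag_mul_single (w : m → ℝ) (M : Matrix m m ℝ) (a b : m) :
    weightedDiag w (M * single a b 1) = w b * M b a := by
  rw [weightedDiag_apply, Finset.sum_eq_single b]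
  · rw [mul_single_apply_same, mul_one]
  · intro k _ hk
    simp [hk]
  · simp

lemma weightedDiag_diagonal_mul (w d : m → ℝ) (X : Matrix m m ℝ) :
    weightedDiag w (diagonal d * X) = weightedDiag (w * d) X := by
  simp only [weightedDiag_apply, diagonal_mul, Pi.mul_apply, mul_assoc]

lemma single_one_mul_single_one (a b c d : m) :
    (single a b 1 : Matrix m m ℝ) * single c d 1 = if b = c then single a d 1 else 0 := by
  split_ifs with h
  · subst h; simp
  · simp [h]

variable {R : Type*}

lemma commute_mul_self_of_isSymm_mul [CommRing R] {A D : Matrix m m R}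
    (hA : A ∈ orthogonalGroup m R) (hD : D.IsSymm) (hDA : (D * A).IsSymm) :
    Commute A (D * D) := by
  have hAAt : A * Aᵀ = 1 := (mem_orthogonalGroup_iff _ _).mp hA
  have hAtD : Aᵀ * D = D * A := by simpa [transpose_mul, hD.eq] using hDA.eq
  have hDAt : D * Aᵀ = A * D := by
    calc D * Aᵀ = A * (Aᵀ * D) * Aᵀ := by rw [← Matrix.mul_assoc, hAAt, Matrix.one_mul]
      _ = A * D := by rw [hAtD, Matrix.mul_assoc, Matrix.mul_assoc, hAAt, Matrix.mul_one]
  calc A * (D * D) = D * Aᵀ * D := by rw [hDAt, Matrix.mul_assoc]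
    _ = D * D * A := by rw [Matrix.mul_assoc, hAtD, Matrix.mul_assoc]

lemma isDiag_of_commute_diagonal [CommRing R] [NoZeroDivisors R] {d : m → R}
    (hd : Function.Injective d) {A : Matrix m m R} (h : Commute A (diagonal d)) : A.IsDiag := by
  intro a b hab
  have hab' : A a b * d b = d a * A a b := by
    simpa only [mul_diagonal, diagonal_mul] using congr_fun₂ h.eq a b
  have : (d b - d a) * A a b = 0 := by linear_combination hab'
  exact (mul_eq_zero.mp this).resolve_left (sub_ne_zero.mpr (hd.ne (Ne.symm hab)))

lemma IsDiag.mul_self_apply_eq_one [CommRing R] {A : Matrix m m R} (hdiag : A.IsDiag)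
    (hA : A ∈ orthogonalGroup m R) (k : m) : A k k * A k k = 1 := by
  have := congr_fun₂ ((mem_orthogonalGroup_iff _ _).mp hA) k k
  rwa [← hdiag.diagonal_diag, diagonal_transpose, diagonal_mul_diagonal, diagonal_apply_eq,
    one_apply_eq] at this

end Matrix

variable {n : ℕ} {i j : Fin n}

noncomputable def rotProj (n : ℕ) (i j : Fin n) : Matrix (Fin n) (Fin n) ℝ :=
  single i i 1 + single j j 1

noncomputable def rotGen (n : ℕ) (i j : Fin n) : Matrix (Fin n) (Fin n) ℝ :=
  single j i 1 - single i j 1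

lemma rotB_eq (h : i ≠ j) (θ : ℝ) :
    rotB n i j θ = Real.cos θ • rotProj n i j + Real.sin θ • rotGen n i j + (1 - rotProj n i j) := by
  ext k l
  simp only [rotB, rotProj, rotGen, of_apply, Matrix.add_apply, Matrix.sub_apply, Matrix.smul_apply,
    one_apply, single_apply, smul_eq_mul]
  split_ifs <;> grind

lemma rotProj_mul_rotProj (h : i ≠ j) : rotProj n i j * rotProj n i j = rotProj n i j := by
  simp [rotProj, add_mul, mul_add, h, h.symm]

lemma rotProj_mul_rotGen (h : i ≠ j) : rotProj n i j * rotGen n i j = rotGen n i j := by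
  simp [rotProj, rotGen, add_mul, mul_sub, h, h.symm]

lemma rotGen_mul_rotProj (h : i ≠ j) : rotGen n i j * rotProj n i j = rotGen n i j := by
  simp [rotProj, rotGen, sub_mul, mul_add, h, h.symm]
  abel

lemma rotGen_mul_rotGen (h : i ≠ j) : rotGen n i j * rotGen n i j = -rotProj n i j := by
  simp [rotProj, rotGen, sub_mul, mul_sub, h, h.symm]
  abel

lemma rotB_add (h : i ≠ j) (θ φ : ℝ) : rotB n i j (θ + φ) = rotB n i j θ * rotB n i j φ := by
  simp only [rotB_eq h, Real.cos_add, Real.sin_add, add_mul, mul_add, sub_mul, mul_sub,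
    smul_mul_assoc, mul_smul_comm, one_mul, mul_one, rotProj_mul_rotProj h, rotProj_mul_rotGen h,
    rotGen_mul_rotProj h, rotGen_mul_rotGen h, smul_neg]
  module

lemma rotB_zero : rotB n i j 0 = 1 := by
  ext k l
  simp only [rotB, of_apply, Real.cos_zero, Real.sin_zero, neg_zero, one_apply]
  split_ifs <;> grind

lemma transpose_rotB (θ : ℝ) : (rotB n i j θ)ᵀ = rotB n i j (-θ) := by
  ext k l
  simp only [rotB, transpose_apply, of_apply, Real.cos_neg, Real.sin_neg, neg_neg]
  split_ifs <;> grind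

lemma rotB_mem_orthogonalGroup (h : i ≠ j) (θ : ℝ) :
    rotB n i j θ ∈ orthogonalGroup (Fin n) ℝ := by
  rw [mem_orthogonalGroup_iff, transpose_rotB, ← rotB_add h, add_neg_cancel, rotB_zero]

lemma det_rotB (h : i ≠ j) (θ : ℝ) : (rotB n i j θ).det = 1 := by
  have hsq : (rotB n i j θ).det * (rotB n i j θ).det = 1 := by
    simpa [det_mul, det_transpose] using
      congr_arg det ((mem_orthogonalGroup_iff _ _).mp (rotB_mem_orthogonalGroup h θ))
  have hnonneg : 0 ≤ (rotB n i j θ).det := by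
    rw [← add_halves θ, rotB_add h, det_mul]
    exact mul_self_nonneg _
  nlinarith

lemma rotB_mem_specialOrthogonalGroup (h : i ≠ j) (θ : ℝ) :
    rotB n i j θ ∈ specialOrthogonalGroup (Fin n) ℝ :=
  ⟨rotB_mem_orthogonalGroup h θ, det_rotB h θ⟩

lemma mul_rotB_mul_eq (h : i ≠ j) (M N : Matrix (Fin n) (Fin n) ℝ) (θ : ℝ) :
    M * rotB n i j θ * N = Real.cos θ • (M * rotProj n i j * N)
      + Real.sin θ • (M * rotGen n i j * N) + M * (1 - rotProj n i j) * N := by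
  simp only [rotB_eq h, Matrix.mul_add, Matrix.add_mul, Matrix.mul_smul, Matrix.smul_mul]

lemma hasDerivAt_mul_rotB_mul (h : i ≠ j) (M N : Matrix (Fin n) (Fin n) ℝ) :
    HasDerivAt (fun θ => M * rotB n i j θ * N) (M * rotGen n i j * N) 0 := by
  rw [funext (mul_rotB_mul_eq h M N)]
  have := (((Real.hasDerivAt_cos 0).smul_const (M * rotProj n i j * N)).add
    ((Real.hasDerivAt_sin 0).smul_const (M * rotGen n i j * N))).add_const
    (M * (1 - rotProj n i j) * N)
  simp only [Real.sin_zero, Real.cos_zero, neg_zero, zero_smul, one_smul, zero_add] at this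
  exact this

lemma hasDerivAt_mul_rotB (h : i ≠ j) (M : Matrix (Fin n) (Fin n) ℝ) :
    HasDerivAt (fun θ => M * rotB n i j θ) (M * rotGen n i j) 0 := by
  simpa using hasDerivAt_mul_rotB_mul h M 1

lemma weightedDiag_mul_rotGen (w : Fin n → ℝ) (M : Matrix (Fin n) (Fin n) ℝ) :
    weightedDiag w (M * rotGen n i j) = w i * M i j - w j * M j i := by
  simp only [rotGen, Matrix.mul_sub, map_sub, weightedDiag_mul_single]

lemma IsCritPt.isSymm_diagonal_mul {c : Fin n → ℝ} {A : Matrix (Fin n) (Fin n) ℝ}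
    (hA : A ∈ specialOrthogonalGroup (Fin n) ℝ) (hcrit : IsCritPt n c A) :
    (diagonal c * A).IsSymm := by
  refine IsSymm.ext fun a b => ?_
  rcases eq_or_ne b a with rfl | hba
  · rfl
  have hderiv := hasDerivAt_mul_rotB hba A
  have hzero : deriv (fun t => weightedDiag c (A * rotB n b a t)) 0 = 0 :=
    hcrit _ (fun t => mul_mem hA (rotB_mem_specialOrthogonalGroup hba t))
      (by rw [rotB_zero, Matrix.mul_one]) hderiv.differentiableAt
  rw [(hderiv.weightedDiag c).deriv, weightedDiag_mul_rotGen] at hzero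
  simp only [diagonal_mul]
  linarith

lemma weightedDiag_rotGen_mul_rotGen (w : Fin n → ℝ) {k l : Fin n} (hij : i < j) (hkl : k < l) :
    weightedDiag w (rotGen n i j * rotGen n k l) = if i = k ∧ j = l then -(w i + w j) else 0 := by
  simp only [rotGen, sub_mul, mul_sub, single_one_mul_single_one, apply_ite (weightedDiag w),
    map_sub, map_zero, weightedDiag_single]
  split_ifs <;> grind

lemma hessB_apply (c : Fin n → ℝ) (A : Matrix (Fin n) (Fin n) ℝ) (p q : Pairs n) :
    hessB n c A p q = weightedDiag c (A * rotGen n p.1.1 p.1.2 * rotGen n q.1.1 q.1.2) := by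
  have hp : p.1.1 ≠ p.1.2 := p.2.ne
  have hq : q.1.1 ≠ q.1.2 := q.2.ne
  change deriv (fun φ => deriv
    (fun θ => weightedDiag c (A * rotB n p.1.1 p.1.2 θ * rotB n q.1.1 q.1.2 φ)) 0) 0 = _
  simp_rw [((hasDerivAt_mul_rotB_mul hp A _).weightedDiag c).deriv]
  exact ((hasDerivAt_mul_rotB hq _).weightedDiag c).deriv

lemma hessB_diagonal (c a : Fin n → ℝ) :
    hessB n c (diagonal a) = diagonal fun p : Pairs n =>
      -(c p.1.1 * a p.1.1 + c p.1.2 * a p.1.2) := by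
  ext p q
  have hpq : p = q ↔ p.1.1 = q.1.1 ∧ p.1.2 = q.1.2 :=
    Subtype.ext_iff.trans Prod.ext_iff
  rw [hessB_apply, Matrix.mul_assoc, weightedDiag_diagonal_mul,
    weightedDiag_rotGen_mul_rotGen _ p.2 q.2, diagonal_apply]
  simp only [hpq, Pi.mul_apply]

lemma mul_add_mul_ne_zero_of_mul_self_eq_one {x y a b : ℝ} (hx : 0 ≤ x) (hxy : x < y)
    (ha : a * a = 1) (hb : b * b = 1) : x * a + y * b ≠ 0 := by
  intro h
  have : y * y = x * x := by linear_combination (y * b - x * a) * h - y * y * hb + x * x * ha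
  exact (mul_self_lt_mul_self hx hxy).ne' this

/-- The function `f_C : SO(n) → ℝ`, `f_C(A) = ∑ i, c i * A i i` with
`0 ≤ c 0 < ... < c (n-1)`, is a Morse function: every critical point of `f_C` is
non-degenerate, i.e. the Hessian of `f_C` in the local coordinates given by the rotations
`B_{ij}` is invertible there. -/
theorem fC_isMorse (n : ℕ) (c : Fin n → ℝ) (hc : StrictMono c) (hc0 : ∀ i, 0 ≤ c i)
    (A : Matrix (Fin n) (Fin n) ℝ) (hA : A ∈ Matrix.specialOrthogonalGroup (Fin n) ℝ)
    (hcrit : IsCritPt n c A) :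
    (hessB n c A).det ≠ 0 := by
  have hc_sq : Function.Injective fun k => c k * c k :=
    StrictMono.injective fun k l hkl => mul_self_lt_mul_self (hc0 k) (hc hkl)
  have hcomm : Commute A (diagonal fun k => c k * c k) := by
    rw [← diagonal_mul_diagonal]
    exact commute_mul_self_of_isSymm_mul hA.1 (isDiag_diagonal c).isSymm
      (hcrit.isSymm_diagonal_mul hA)
  have hdiag : A.IsDiag := isDiag_of_commute_diagonal hc_sq hcomm
  rw [← hdiag.diagonal_diag, hessB_diagonal, det_diagonal]
  exact Finset.prod_ne_zero_iff.mpr fun p _ => neg_ne_zero.mpr <|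
    mul_add_mul_ne_zero_of_mul_self_eq_one (hc0 _) (hc p.2)
      (hdiag.mul_self_apply_eq_one hA.1 _) (hdiag.mul_self_apply_eq_one hA.1 _)
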